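/- arXiv:1205.1985 — 2 statements merged into one kernel-verified Lean document; each statement's English description precedes it below -/
import Mathlib

section
/- Commutation of maximal function and Riesz potential: for 0 < α < n there is a constant C = C(n,α) such that for every non-negative measurable f on ℝ^n and every x ∈ ℝ^n, M(I_α f)(x) ≤ C · I_α(M f)(x), where M is the Hardy–Littlewood maximal operator and I_α f(x) = ∫ |x−y|^{α−n} f(y) dy. -/
/-!
For `K(z) = |z|^{α-n}` one has `⨍_{B(x,r)} K(· - y) ≤ C K(x - y)`: if `|x - y| ≥ 2r` then
`K(· - y) ≤ 2^{n-α} K(x - y)` on the ball, and otherwise `B(x,r) ⊆ B(y,3r)`, where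
`∫_{B(y,3r)} K(· - y) = c (3r)^α` (polar coordinates) is at most `C |B(x,r)| (2r)^{α-n}`.
Integrating against `f` (Tonelli) gives `M(I_α f) ≤ C I_α f` pointwise, and Lebesgue's
differentiation theorem gives `f ≤ M f` a.e., hence `I_α f ≤ I_α (M f)`.
-/

open MeasureTheory Metric

/-- Riesz potential `I_α g(x) = ∫ |x-y|^{α-n} g(y) dy` (values in `[0,∞]`). -/
noncomputable def rieszPot (n : ℕ) (α : ℝ) (g : EuclideanSpace ℝ (Fin n) → ENNReal)
    (x : EuclideanSpace ℝ (Fin n)) : ENNReal :=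
  ∫⁻ y, ENNReal.ofReal (‖x - y‖ ^ (α - (n : ℝ))) * g y

/-- Centered Hardy–Littlewood maximal function `M g(x) = sup_{r>0} ⨍_{B_r(x)} g`. -/
noncomputable def maximal (n : ℕ) (g : EuclideanSpace ℝ (Fin n) → ENNReal)
    (x : EuclideanSpace ℝ (Fin n)) : ENNReal :=
  ⨆ (r : ℝ) (_ : 0 < r), (volume (ball x r))⁻¹ * ∫⁻ y in ball x r, g y

open Module Set Filter Topology
open scoped ENNReal

lemma pow_pred_mul_rpow_sub_natCast {y : ℝ} (hy : 0 < y) {d : ℕ} (hd : 0 < d) (α : ℝ) :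
    y ^ (d - 1) * y ^ (α - d) = y ^ (α - 1) := by
  rw [← Real.rpow_natCast, ← Real.rpow_add hy, Nat.cast_sub hd]
  ring_nf

lemma norm_sub_rpow_le_of_two_mul_le {F : Type*} [NormedAddCommGroup F] {s : ℝ} (hs : s ≤ 0)
    {x y z : F} {r : ℝ} (hz : z ∈ ball x r) (hfar : 2 * r ≤ ‖x - y‖) :
    ‖z - y‖ ^ s ≤ 2 ^ (-s) * ‖x - y‖ ^ s := by
  have hxy : 0 < ‖x - y‖ := by
    have := nonempty_ball.mp ⟨z, hz⟩; linarith
  have hhalf : ‖x - y‖ / 2 ≤ ‖z - y‖ := by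
    have := norm_sub_le_norm_sub_add_norm_sub x z y
    rw [mem_ball, dist_eq_norm, ← norm_neg, neg_sub] at hz
    linarith
  calc ‖z - y‖ ^ s ≤ (‖x - y‖ / 2) ^ s :=
        Real.rpow_le_rpow_of_nonpos (by positivity) hhalf hs
    _ = 2 ^ (-s) * ‖x - y‖ ^ s := by
        rw [Real.div_rpow hxy.le zero_le_two, div_eq_mul_inv, ← Real.rpow_neg zero_le_two, mul_comm]

lemma setLIntegral_ball_norm_sub_rpow_le_of_two_mul_le {F : Type*} [NormedAddCommGroup F]
    [MeasurableSpace F] (μ : Measure F) {s : ℝ} (hs : s ≤ 0) {x y : F} {r : ℝ}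
    (hfar : 2 * r ≤ ‖x - y‖) :
    ∫⁻ z in ball x r, ENNReal.ofReal (‖z - y‖ ^ s) ∂μ ≤
      ENNReal.ofReal (2 ^ (-s)) * μ (ball x r) * ENNReal.ofReal (‖x - y‖ ^ s) :=
  calc ∫⁻ z in ball x r, ENNReal.ofReal (‖z - y‖ ^ s) ∂μ
      ≤ ∫⁻ _ in ball x r, ENNReal.ofReal (2 ^ (-s) * ‖x - y‖ ^ s) ∂μ :=
        setLIntegral_mono measurable_const fun _ hz ↦
          ENNReal.ofReal_le_ofReal (norm_sub_rpow_le_of_two_mul_le hs hz hfar)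
    _ = _ := by rw [setLIntegral_const, ENNReal.ofReal_mul (by positivity)]; ring

lemma setLIntegral_ball_comp_sub {E : Type*} [NormedAddCommGroup E] [MeasurableSpace E]
    [BorelSpace E] (μ : Measure E) [μ.IsAddRightInvariant] (f : E → ℝ≥0∞) (y : E) (R : ℝ) :
    ∫⁻ z in ball y R, f (z - y) ∂μ = ∫⁻ z in ball 0 R, f z ∂μ := by
  have hpre : (· - y) ⁻¹' ball (0 : E) R = ball y R := by
    ext z; simp [dist_eq_norm]
  rw [← hpre]
  exact (measurePreserving_sub_right μ y).setLIntegral_comp_preimage_emb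
    (measurableEmbedding_subRight y) f _

noncomputable def rieszAvgConst (d : ℕ) (α : ℝ) : ℝ := 2 ^ (d - α) * (1 + d * 3 ^ α / α)

lemma rieszAvgConst_pos (d : ℕ) {α : ℝ} (hα : 0 < α) : 0 < rieszAvgConst d α := by
  unfold rieszAvgConst
  positivity

section HaarKernel

variable {E : Type*} [NormedAddCommGroup E] [NormedSpace ℝ E] [MeasurableSpace E] [BorelSpace E]
  [FiniteDimensional ℝ E] [Nontrivial E] (μ : Measure E) [μ.IsAddHaarMeasure]

lemma integrableOn_ball_norm_rpow {α : ℝ} (hα : 0 < α) (R : ℝ) :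
    IntegrableOn (fun z : E ↦ ‖z‖ ^ (α - finrank ℝ E)) (ball 0 R) μ := by
  rcases le_or_gt R 0 with hR | hR
  · simp [ball_eq_empty.mpr hR]
  rw [integrableOn_fun_norm_addHaar μ (f := fun y ↦ y ^ (α - finrank ℝ E))]
  refine ((intervalIntegral.integrableOn_Ioo_rpow_iff (s := α - 1) hR).mpr (by linarith)).congr_fun
    (fun y hy ↦ ?_) measurableSet_Ioo
  rw [smul_eq_mul, pow_pred_mul_rpow_sub_natCast hy.1 finrank_pos]

lemma integral_ball_norm_rpow {α : ℝ} (hα : 0 < α) {R : ℝ} (hR : 0 ≤ R) :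
    ∫ z in ball (0 : E) R, ‖z‖ ^ (α - finrank ℝ E) ∂μ =
      finrank ℝ E * μ.real (ball 0 1) * (R ^ α / α) := by
  have hind : ∀ z : E, (ball (0 : E) R).indicator (fun z ↦ ‖z‖ ^ (α - finrank ℝ E)) z =
      (Iio R).indicator (fun y ↦ y ^ (α - finrank ℝ E)) ‖z‖ := fun z ↦ by
    simp [indicator]
  have hradial : ∫ y in Ioi (0 : ℝ), y ^ (finrank ℝ E - 1) •
      (Iio R).indicator (fun y ↦ y ^ (α - finrank ℝ E)) y = ∫ y in (0 : ℝ)..R, y ^ (α - 1) := by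
    rw [intervalIntegral.integral_of_le hR, integral_Ioc_eq_integral_Ioo, ← Ioi_inter_Iio,
      ← setIntegral_indicator measurableSet_Iio]
    refine setIntegral_congr_fun measurableSet_Ioi fun y hy ↦ ?_
    by_cases hyR : y < R
    · simp [hyR, pow_pred_mul_rpow_sub_natCast hy finrank_pos]
    · simp [hyR]
  rw [← integral_indicator measurableSet_ball, funext hind, integral_fun_norm_addHaar, hradial,
    integral_rpow (Or.inl (by linarith)), sub_add_cancel, Real.zero_rpow hα.ne', sub_zero,
    nsmul_eq_mul, smul_eq_mul, mul_assoc]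

lemma lintegral_ball_norm_rpow {α : ℝ} (hα : 0 < α) {R : ℝ} (hR : 0 ≤ R) :
    ∫⁻ z in ball (0 : E) R, ENNReal.ofReal (‖z‖ ^ (α - finrank ℝ E)) ∂μ =
      ENNReal.ofReal (finrank ℝ E * μ.real (ball 0 1) * (R ^ α / α)) := by
  rw [← integral_ball_norm_rpow μ hα hR, ofReal_integral_eq_lintegral_ofReal
    (integrableOn_ball_norm_rpow μ hα R) (.of_forall fun z ↦ by positivity)]

lemma setLIntegral_ball_norm_sub_rpow_le_of_near {α : ℝ} (hα : 0 < α) (hαd : α ≤ finrank ℝ E)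
    {x y : E} (hxy : x ≠ y) {r : ℝ} (hr : 0 < r) (hnear : ‖x - y‖ < 2 * r) :
    ∫⁻ z in ball x r, ENNReal.ofReal (‖z - y‖ ^ (α - finrank ℝ E)) ∂μ ≤
      ENNReal.ofReal (2 ^ (finrank ℝ E - α) * (finrank ℝ E * 3 ^ α / α)) * μ (ball x r) *
        ENNReal.ofReal (‖x - y‖ ^ (α - finrank ℝ E)) := by
  set d : ℝ := (finrank ℝ E : ℝ)
  have hsub : ball x r ⊆ ball y (3 * r) := fun z hz ↦ by
    rw [mem_ball, dist_eq_norm] at hz ⊢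
    linarith [norm_sub_le_norm_sub_add_norm_sub z x y]
  have hreal : d * μ.real (ball 0 1) * ((3 * r) ^ α / α) ≤
      2 ^ (d - α) * (d * 3 ^ α / α) * (r ^ finrank ℝ E * μ.real (ball 0 1)) *
        ‖x - y‖ ^ (α - d) := by
    have h2 : (2 : ℝ) ^ (d - α) * 2 ^ (α - d) = 1 := by
      rw [← Real.rpow_add zero_lt_two]; simp
    have hr' : r ^ finrank ℝ E * r ^ (α - d) = r ^ α := by
      rw [← Real.rpow_natCast, ← Real.rpow_add hr, add_sub_cancel]
    calc d * μ.real (ball 0 1) * ((3 * r) ^ α / α)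
        = 2 ^ (d - α) * (d * 3 ^ α / α) * (r ^ finrank ℝ E * μ.real (ball 0 1)) *
            (2 * r) ^ (α - d) := by
          rw [Real.mul_rpow zero_le_three hr.le, Real.mul_rpow zero_le_two hr.le]
          linear_combination (-(d * 3 ^ α / α * μ.real (ball 0 1))) *
            (r ^ α * h2 + 2 ^ (d - α) * 2 ^ (α - d) * hr')
      _ ≤ _ := mul_le_mul_of_nonneg_left
          (Real.rpow_le_rpow_of_nonpos (norm_sub_pos_iff.mpr hxy) hnear.le (by linarith))
          (by positivity)
  calc ∫⁻ z in ball x r, ENNReal.ofReal (‖z - y‖ ^ (α - d)) ∂μ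
      ≤ ∫⁻ z in ball y (3 * r), ENNReal.ofReal (‖z - y‖ ^ (α - d)) ∂μ :=
        lintegral_mono_set hsub
    _ = ENNReal.ofReal (d * μ.real (ball 0 1) * ((3 * r) ^ α / α)) := by
        rw [setLIntegral_ball_comp_sub μ (fun z ↦ ENNReal.ofReal (‖z‖ ^ (α - d))),
          lintegral_ball_norm_rpow μ hα (by positivity)]
    _ ≤ _ := by
        rw [μ.addHaar_ball x hr.le, ← ofReal_measureReal, ← ENNReal.ofReal_mul (by positivity),
          ← ENNReal.ofReal_mul (by positivity), ← ENNReal.ofReal_mul (by positivity)]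
        exact ENNReal.ofReal_le_ofReal hreal

lemma setLIntegral_ball_norm_sub_rpow_le {α : ℝ} (hα : 0 < α) (hαd : α ≤ finrank ℝ E)
    {x y : E} (hxy : x ≠ y) {r : ℝ} (hr : 0 < r) :
    ∫⁻ z in ball x r, ENNReal.ofReal (‖z - y‖ ^ (α - finrank ℝ E)) ∂μ ≤
      ENNReal.ofReal (rieszAvgConst (finrank ℝ E) α) * μ (ball x r) *
        ENNReal.ofReal (‖x - y‖ ^ (α - finrank ℝ E)) := by
  have hnonneg : 0 ≤ (finrank ℝ E : ℝ) * 3 ^ α / α := by positivity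
  rw [rieszAvgConst]
  rcases le_or_gt (2 * r) ‖x - y‖ with hfar | hnear
  · refine (neg_sub α (finrank ℝ E : ℝ) ▸
      setLIntegral_ball_norm_sub_rpow_le_of_two_mul_le μ (by linarith) hfar).trans ?_
    gcongr
    exact le_mul_of_one_le_right (by positivity) (by linarith)
  · refine (setLIntegral_ball_norm_sub_rpow_le_of_near μ hα hαd hxy hr hnear).trans ?_
    gcongr
    linarith

end HaarKernel

section Euclidean

variable {n : ℕ}

lemma maximal_mono {g h : EuclideanSpace ℝ (Fin n) → ℝ≥0∞} (hgh : g ≤ h) :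
    maximal n g ≤ maximal n h := fun x ↦
  iSup₂_mono fun r _ ↦ by gcongr with y; exact hgh y

lemma setLIntegral_rieszPot_le [NeZero n] {α : ℝ} (hα : 0 < α) (hαn : α < n)
    {g : EuclideanSpace ℝ (Fin n) → ℝ≥0∞} (hg : Measurable g) (x : EuclideanSpace ℝ (Fin n))
    {r : ℝ} (hr : 0 < r) :
    ∫⁻ z in ball x r, rieszPot n α g z ≤
      volume (ball x r) * (ENNReal.ofReal (rieszAvgConst n α) * rieszPot n α g x) := by
  have hkernel : Measurable fun p : EuclideanSpace ℝ (Fin n) × EuclideanSpace ℝ (Fin n) ↦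
      ENNReal.ofReal (‖p.1 - p.2‖ ^ (α - n)) := by fun_prop
  have hne : ∀ᵐ y ∂volume, x ≠ y := by
    rw [ae_iff]
    simp
  calc ∫⁻ z in ball x r, rieszPot n α g z
      = ∫⁻ y, (∫⁻ z in ball x r, ENNReal.ofReal (‖z - y‖ ^ (α - n))) * g y := by
        simp only [rieszPot]
        rw [lintegral_lintegral_swap (hkernel.mul (hg.comp measurable_snd)).aemeasurable]
        refine lintegral_congr fun y ↦ lintegral_mul_const _ ?_
        fun_prop
    _ ≤ ∫⁻ y, ENNReal.ofReal (rieszAvgConst n α) * volume (ball x r) *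
          ENNReal.ofReal (‖x - y‖ ^ (α - n)) * g y := by
        refine lintegral_mono_ae (hne.mono fun y hxy ↦ ?_)
        gcongr
        simpa [finrank_euclideanSpace_fin] using
          setLIntegral_ball_norm_sub_rpow_le volume hα (by simpa using hαn.le) hxy hr
    _ = volume (ball x r) * (ENNReal.ofReal (rieszAvgConst n α) * rieszPot n α g x) := by
        rw [rieszPot, ← lintegral_const_mul' _ _ ENNReal.ofReal_ne_top,
          ← lintegral_const_mul' _ _ measure_ball_lt_top.ne]
        exact lintegral_congr fun y ↦ by ring

lemma maximal_rieszPot_le [NeZero n] {α : ℝ} (hα : 0 < α) (hαn : α < n)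
    {g : EuclideanSpace ℝ (Fin n) → ℝ≥0∞} (hg : Measurable g) (x : EuclideanSpace ℝ (Fin n)) :
    maximal n (rieszPot n α g) x ≤ ENNReal.ofReal (rieszAvgConst n α) * rieszPot n α g x :=
  iSup₂_le fun r hr ↦ (ENNReal.inv_mul_le_iff (measure_ball_pos _ _ hr).ne' (by finiteness)).mpr
    (setLIntegral_rieszPot_le hα hαn hg x hr)

lemma ae_le_maximal_of_lintegral_ne_top [NeZero n] {g : EuclideanSpace ℝ (Fin n) → ℝ≥0∞}
    (hg : AEMeasurable g) (hint : ∫⁻ y, g y ≠ ∞) : ∀ᵐ y, g y ≤ maximal n g y := by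
  filter_upwards [(Besicovitch.vitaliFamily volume).ae_tendsto_lintegral_div hg hint] with y hy
  refine le_of_tendsto (hy.comp (Besicovitch.tendsto_filterAt volume y)) ?_
  filter_upwards [self_mem_nhdsWithin] with r (hr : 0 < r)
  have hball : ball y r =ᵐ[volume] closedBall y r :=
    ae_eq_of_subset_of_measure_ge ball_subset_closedBall
      (Measure.addHaar_closedBall_eq_addHaar_ball volume y r).le measurableSet_ball.nullMeasurableSet
      measure_closedBall_lt_top.ne
  rw [Function.comp_apply, ← setLIntegral_congr hball, ← measure_congr hball,
    ENNReal.div_eq_inv_mul]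
  exact le_iSup₂ (f := fun s (_ : 0 < s) ↦ (volume (ball y s))⁻¹ * ∫⁻ z in ball y s, g z) r hr

lemma ae_le_maximal [NeZero n] {g : EuclideanSpace ℝ (Fin n) → ℝ≥0∞} (hg : Measurable g) :
    ∀ᵐ y, g y ≤ maximal n g y := by
  -- The differentiation theorem needs a finite integral: apply it to truncations increasing to `g`.
  set trunc : ℕ → EuclideanSpace ℝ (Fin n) → ℝ≥0∞ :=
    fun k ↦ (ball 0 k).indicator fun y ↦ min (g y) k
  have htrunc_meas : ∀ k, Measurable (trunc k) := fun k ↦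
    (hg.min measurable_const).indicator measurableSet_ball
  have htrunc_int : ∀ k, ∫⁻ y, trunc k y ≠ ∞ := fun k ↦ by
    rw [lintegral_indicator measurableSet_ball]
    refine ne_top_of_le_ne_top ?_
      (setLIntegral_mono measurable_const fun y _ ↦ min_le_right (g y) k)
    rw [setLIntegral_const]
    exact ENNReal.mul_ne_top (ENNReal.natCast_ne_top k) measure_ball_lt_top.ne
  have htrunc : ∀ᵐ y, ∀ k, trunc k y ≤ maximal n g y := ae_all_iff.2 fun k ↦
    (ae_le_maximal_of_lintegral_ne_top (htrunc_meas k).aemeasurable (htrunc_int k)).mono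
      fun y hy ↦ hy.trans (maximal_mono (indicator_le fun y _ ↦ min_le_left _ _) y)
  filter_upwards [htrunc] with y hy
  have hmin : Tendsto (fun k : ℕ ↦ min (g y) k) atTop (𝓝 (g y)) := by
    simpa using tendsto_const_nhds.min ENNReal.tendsto_nat_nhds_top
  refine le_of_tendsto' (hmin.congr' ?_) hy
  filter_upwards [(tendsto_natCast_atTop_atTop (R := ℝ)).eventually_gt_atTop ‖y‖] with k hk
  simp [trunc, indicator_of_mem (mem_ball_zero_iff.2 hk)]

lemma rieszPot_le_rieszPot_maximal [NeZero n] (α : ℝ) {g : EuclideanSpace ℝ (Fin n) → ℝ≥0∞}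
    (hg : Measurable g) (x : EuclideanSpace ℝ (Fin n)) :
    rieszPot n α g x ≤ rieszPot n α (maximal n g) x :=
  lintegral_mono_ae ((ae_le_maximal hg).mono fun y hy ↦ by gcongr)

end Euclidean

/-- Commutation of the maximal function and the Riesz potential:
`M(I_α f)(x) ≤ C · I_α(M f)(x)` for every nonnegative measurable `f`. -/
theorem stmt11 (n : ℕ) (hn : 0 < n) (α : ℝ) (hα0 : 0 < α) (hαn : α < n) :
    ∃ C : ℝ, 0 < C ∧ ∀ f : EuclideanSpace ℝ (Fin n) → ℝ, Measurable f → (∀ x, 0 ≤ f x) →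
      ∀ x : EuclideanSpace ℝ (Fin n),
        maximal n (rieszPot n α (fun y => ENNReal.ofReal (f y))) x ≤
          ENNReal.ofReal C * rieszPot n α (maximal n (fun y => ENNReal.ofReal (f y))) x := by
  have : NeZero n := ⟨hn.ne'⟩
  refine ⟨rieszAvgConst n α, rieszAvgConst_pos n hα0, fun f hf _ x ↦ ?_⟩
  have hg : Measurable fun y ↦ ENNReal.ofReal (f y) := hf.ennreal_ofReal
  calc maximal n (rieszPot n α fun y ↦ ENNReal.ofReal (f y)) x
      ≤ ENNReal.ofReal (rieszAvgConst n α) * rieszPot n α (fun y ↦ ENNReal.ofReal (f y)) x :=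
        maximal_rieszPot_le hα0 hαn hg x
    _ ≤ _ := by gcongr; exact rieszPot_le_rieszPot_maximal α hg x
end

section
/- Oscillation bound via the maximal function of a Riesz potential: for 0 < α < n there is a constant C such that for every non-negative f ∈ L^1_loc(ℝ^n), every x₀ and every r > 0, ⨍_{B_r(x₀)} |I_α f − ⨍_{B_r(x₀)} I_α f| ≤ 2 M(I_α f)(x₀) ≤ C · I_α(M f)(x₀). -/
open MeasureTheory Metric

/-! On a ball `B = B(x₀, s)` split `I_α f` into the contributions of `y ∈ B(x₀, 2s)` and of
`y ∉ B(x₀, 2s)`. For far `y` the kernel `|x - y|^{α-n}` is at most `2^{n-α} |x₀ - y|^{α-n}`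
uniformly in `x ∈ B`, and `f ≤ M f` a.e. by Lebesgue differentiation. For near `y`, Tonelli and
`∫_{B(y, 3s)} |x - y|^{α-n} dx = (n |B₁| / α) (3s)^α` bound the average over `B` by
`s^{α-n} ∫_{B(x₀, 2s)} f`; this is controlled by `I_α (M f)(x₀)`, since on `B(x₀, 2s)` the kernel
is at least `(2s)^{α-n}` and `M f ≥ 2^{-n} ⨍_{B(x₀, 2s)} f`. The oscillation bound itself only
uses `|g - A| ≤ g + A`. -/

open Set

section Kernel

variable {E : Type*} [NormedAddCommGroup E] [NormedSpace ℝ E] [FiniteDimensional ℝ E]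
  [MeasurableSpace E] [BorelSpace E] [Nontrivial E] (μ : Measure E) [μ.IsAddHaarMeasure]
  {α : ℝ}

local notation "d" => Module.finrank ℝ E

theorem setIntegral_ball_norm_rpow (hα : 0 < α) {t : ℝ} (ht : 0 ≤ t) :
    ∫ x in ball (0 : E) t, ‖x‖ ^ (α - d) ∂μ = d * μ.real (ball 0 1) / α * t ^ α := by
  have hd : 1 ≤ d := Module.finrank_pos
  have h_radial : ∀ y ∈ Ioi (0 : ℝ), y ^ (d - 1) • (Iio t).indicator (· ^ (α - d)) y =
      (Ioo 0 t).indicator (· ^ (α - 1)) y := by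
    intro y (hy : 0 < y)
    by_cases hyt : y < t
    · simp only [indicator_of_mem (show y ∈ Iio t from hyt),
        indicator_of_mem (show y ∈ Ioo 0 t from ⟨hy, hyt⟩), smul_eq_mul]
      rw [← Real.rpow_natCast, ← Real.rpow_add hy, Nat.cast_sub hd]
      congr 1
      ring
    · simp [hyt]
  calc ∫ x in ball (0 : E) t, ‖x‖ ^ (α - d) ∂μ
      = ∫ x, (Iio t).indicator (· ^ (α - d)) ‖x‖ ∂μ := by
        rw [← integral_indicator measurableSet_ball]
        congr 1 with x
        simp [indicator]
    _ = d * μ.real (ball 0 1) * ∫ y in Ioi (0 : ℝ), (Ioo 0 t).indicator (· ^ (α - 1)) y := by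
        rw [integral_fun_norm_addHaar, setIntegral_congr_fun measurableSet_Ioi h_radial,
          nsmul_eq_mul, smul_eq_mul, mul_assoc]
    _ = d * μ.real (ball 0 1) / α * t ^ α := by
        rw [setIntegral_indicator measurableSet_Ioo, inter_eq_right.2 Ioo_subset_Ioi_self,
          ← integral_Ioc_eq_integral_Ioo, ← intervalIntegral.integral_of_le ht,
          integral_rpow (Or.inl (by linarith))]
        simp [Real.zero_rpow hα.ne']
        ring

theorem lintegral_ball_norm_sub_rpow (hα : 0 < α) (c : E) {t : ℝ} (ht : 0 < t) :
    ∫⁻ x in ball c t, ENNReal.ofReal (‖x - c‖ ^ (α - d)) ∂μ =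
      ENNReal.ofReal (d * μ.real (ball 0 1) / α * t ^ α) := by
  have hpos : 0 < d * μ.real (ball (0 : E) 1) / α * t ^ α := by
    have : 0 < μ.real (ball (0 : E) 1) :=
      ENNReal.toReal_pos (measure_ball_pos μ 0 one_pos).ne' measure_ball_lt_top.ne
    have : (0 : ℝ) < d := by exact_mod_cast Module.finrank_pos
    positivity
  have hint : IntegrableOn (fun x : E => ‖x‖ ^ (α - d)) (ball 0 t) μ :=
    Integrable.of_integral_ne_zero (by rw [setIntegral_ball_norm_rpow μ hα ht.le]; exact hpos.ne')
  rw [← setIntegral_ball_norm_rpow μ hα ht.le, ofReal_integral_eq_lintegral_ofReal hint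
    (Filter.Eventually.of_forall fun x => by positivity),
    ← lintegral_indicator measurableSet_ball, ← lintegral_indicator measurableSet_ball,
    ← lintegral_sub_right_eq_self
      ((ball (0 : E) t).indicator fun x => ENNReal.ofReal (‖x‖ ^ (α - d))) c]
  congr 1 with x
  simp [indicator, mem_ball, dist_eq_norm]

theorem lintegral_ball_norm_sub_rpow_le (hα : 0 < α) {x₀ y : E} {s : ℝ} (hs : 0 < s)
    (hy : y ∈ ball x₀ (2 * s)) :
    ∫⁻ x in ball x₀ s, ENNReal.ofReal (‖x - y‖ ^ (α - d)) ∂μ ≤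
      ENNReal.ofReal (d * μ.real (ball 0 1) / α * (3 * s) ^ α) := by
  rw [← lintegral_ball_norm_sub_rpow μ hα y (by positivity : 0 < 3 * s)]
  refine lintegral_mono_set (ball_subset_ball' ?_)
  rw [mem_ball'] at hy
  linarith

end Kernel

theorem setLAverage_oscillation_le_two_mul {X : Type*} [MeasurableSpace X] (μ : Measure X)
    (g : X → ENNReal) (s : Set X) :
    (μ s)⁻¹ * ∫⁻ y in s, ((g y - (μ s)⁻¹ * ∫⁻ z in s, g z ∂μ) ⊔
        ((μ s)⁻¹ * ∫⁻ z in s, g z ∂μ - g y)) ∂μ ≤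
      2 * ((μ s)⁻¹ * ∫⁻ z in s, g z ∂μ) := by
  set A := (μ s)⁻¹ * ∫⁻ z in s, g z ∂μ
  calc (μ s)⁻¹ * ∫⁻ y in s, ((g y - A) ⊔ (A - g y)) ∂μ
      ≤ (μ s)⁻¹ * ∫⁻ y in s, (g y + A) ∂μ := by
        gcongr with y
        exact sup_le (le_add_right tsub_le_self) (le_add_left tsub_le_self)
    _ = A + A * ((μ s)⁻¹ * μ s) := by
        rw [lintegral_add_right _ measurable_const, setLIntegral_const, mul_add]
        ring
    _ ≤ 2 * A := by
        grw [ENNReal.inv_mul_le_one, mul_one, two_mul]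

section Riesz

variable {n : ℕ} {α : ℝ}

local notation "ℝⁿ" => EuclideanSpace ℝ (Fin n)

theorem setLAverage_le_maximal (g : ℝⁿ → ENNReal) (x : ℝⁿ) {r : ℝ} (hr : 0 < r) :
    (volume (ball x r))⁻¹ * ∫⁻ y in ball x r, g y ≤ maximal n g x :=
  le_iSup₂ (f := fun r (_ : 0 < r) => (volume (ball x r))⁻¹ * ∫⁻ y in ball x r, g y) r hr

theorem ae_ofReal_le_maximal {f : ℝⁿ → ℝ} (hf : LocallyIntegrable f) (hf0 : ∀ x, 0 ≤ f x) :
    ∀ᵐ y, ENNReal.ofReal (f y) ≤ maximal n (fun z => ENNReal.ofReal (f z)) y := by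
  filter_upwards [(Besicovitch.vitaliFamily volume).ae_tendsto_average hf] with y hy
  refine le_of_tendsto (ENNReal.tendsto_ofReal (hy.comp (Besicovitch.tendsto_filterAt _ y)))
    (eventually_nhdsWithin_of_forall fun ρ (hρ : 0 < ρ) => ?_)
  have hsphere : closedBall y ρ =ᵐ[volume] ball y ρ :=
    (ae_eq_of_subset_of_measure_ge ball_subset_closedBall
      (by rw [Measure.addHaar_closedBall _ _ hρ.le, Measure.addHaar_ball_of_pos _ _ hρ])
      measurableSet_ball.nullMeasurableSet measure_closedBall_lt_top.ne).symm
  rw [Function.comp_apply,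
    ofReal_setAverage (hf.integrableOn_isCompact (isCompact_closedBall y ρ))
      (Filter.Eventually.of_forall fun z => hf0 z),
    setLIntegral_congr hsphere, measure_congr hsphere, ENNReal.div_eq_inv_mul]
  exact setLAverage_le_maximal _ y hρ

theorem norm_sub_rpow_le_of_far {E : Type*} [SeminormedAddCommGroup E] {x x₀ y : E} {s β : ℝ}
    (hβ : β ≤ 0) (hx : dist x x₀ < s) (hy : 2 * s ≤ dist y x₀) :
    ‖x - y‖ ^ β ≤ 2 ^ (-β) * ‖x₀ - y‖ ^ β := by
  have hfar : ‖x₀ - y‖ / 2 ≤ ‖x - y‖ := by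
    rw [← dist_eq_norm, ← dist_eq_norm]
    linarith [dist_triangle x₀ x y, dist_comm x x₀, dist_comm y x₀]
  have hpos : 0 < ‖x₀ - y‖ := by
    rw [← dist_eq_norm, dist_comm]
    linarith [dist_nonneg (x := x) (y := x₀)]
  calc ‖x - y‖ ^ β ≤ (‖x₀ - y‖ / 2) ^ β := Real.rpow_le_rpow_of_nonpos (by positivity) hfar hβ
    _ = 2 ^ (-β) * ‖x₀ - y‖ ^ β := by
        rw [Real.div_rpow (norm_nonneg _) zero_le_two, Real.rpow_neg zero_le_two, div_eq_inv_mul]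

theorem setLAverage_le_maximal_of_mem_ball (F : ℝⁿ → ENNReal) {x₀ y : ℝⁿ} {t : ℝ}
    (hy : y ∈ ball x₀ t) :
    (ENNReal.ofReal (2 ^ n) * volume (ball x₀ t))⁻¹ * ∫⁻ z in ball x₀ t, F z ≤ maximal n F y := by
  have ht : 0 < t := pos_of_mem_ball hy
  have hdouble : volume (ball y (2 * t)) = ENNReal.ofReal (2 ^ n) * volume (ball x₀ t) := by
    rw [Measure.addHaar_ball_mul_of_pos _ _ two_pos, finrank_euclideanSpace_fin,
      ← Measure.addHaar_ball_center volume x₀]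
  rw [← hdouble]
  exact (mul_le_mul_right (lintegral_mono_set (ball_subset_ball' (by linarith [mem_ball'.1 hy])))
    _).trans (setLAverage_le_maximal F y (by positivity))

theorem nontrivial_euclideanSpace_of_lt (hα0 : 0 < α) (hαn : α < n) : Nontrivial ℝⁿ :=
  have : NeZero n := ⟨by rintro rfl; simp at hαn; linarith⟩
  inferInstance

theorem lintegral_ball_le_rieszPot_maximal (hα0 : 0 < α) (hαn : α < n) (F : ℝⁿ → ENNReal)
    (x₀ : ℝⁿ) {t : ℝ} (ht : 0 < t) :
    ∫⁻ y in ball x₀ t, F y ≤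
      ENNReal.ofReal (2 ^ n * t ^ ((n : ℝ) - α)) * rieszPot n α (maximal n F) x₀ := by
  have := nontrivial_euclideanSpace_of_lt hα0 hαn
  set X := ∫⁻ y in ball x₀ t, F y
  set V := volume (ball x₀ t)
  have hV0 : V ≠ 0 := (measure_ball_pos volume x₀ ht).ne'
  have hVtop : V ≠ ⊤ := measure_ball_lt_top.ne
  -- `‖x₀ - x₀‖ ^ (α - n) = 0` is a junk value, so the kernel bound only holds off the centre.
  have hk : ∀ y ∈ ball x₀ t, y ≠ x₀ →
      ENNReal.ofReal (t ^ (α - n)) ≤ ENNReal.ofReal (‖x₀ - y‖ ^ (α - n)) := by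
    intro y hy hne
    rw [mem_ball, dist_eq_norm, ← norm_neg, neg_sub] at hy
    exact ENNReal.ofReal_le_ofReal
      (Real.rpow_le_rpow_of_nonpos (norm_pos_iff.2 (sub_ne_zero.2 hne.symm)) hy.le (by linarith))
  have hlow : ENNReal.ofReal (t ^ (α - n)) * ((ENNReal.ofReal (2 ^ n) * V)⁻¹ * X) * V ≤
      rieszPot n α (maximal n F) x₀ := by
    rw [← setLIntegral_const]
    refine le_trans (lintegral_mono_ae ?_) (setLIntegral_le_lintegral (ball x₀ t) _)
    filter_upwards [ae_restrict_mem measurableSet_ball,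
      ae_restrict_of_ae (Measure.ae_ne volume x₀)] with y hy hne
    exact mul_le_mul' (hk y hy hne) (setLAverage_le_maximal_of_mem_ball F hy)
  have hexp : ENNReal.ofReal (2 ^ n * t ^ ((n : ℝ) - α)) * ENNReal.ofReal (t ^ (α - n)) =
      ENNReal.ofReal (2 ^ n) := by
    rw [← ENNReal.ofReal_mul (by positivity), mul_assoc, ← Real.rpow_add ht]
    simp
  have hcancel : ENNReal.ofReal (2 ^ n) * V * (ENNReal.ofReal (2 ^ n) * V)⁻¹ = 1 :=
    ENNReal.mul_inv_cancel (mul_ne_zero (by simp) hV0) (ENNReal.mul_ne_top (by simp) hVtop)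
  calc X = ENNReal.ofReal (2 ^ n) * V * (ENNReal.ofReal (2 ^ n) * V)⁻¹ * X := by
        rw [hcancel, one_mul]
    _ = ENNReal.ofReal (2 ^ n * t ^ ((n : ℝ) - α)) *
        (ENNReal.ofReal (t ^ (α - n)) * ((ENNReal.ofReal (2 ^ n) * V)⁻¹ * X) * V) := by
        rw [← hexp]
        ring
    _ ≤ _ := by gcongr

theorem lintegral_compl_ball_le_rieszPot_maximal (hαn : α < n) {F : ℝⁿ → ENNReal}
    (hFM : F ≤ᵐ[volume] maximal n F) {x₀ x : ℝⁿ} {s : ℝ} (hx : x ∈ ball x₀ s) :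
    ∫⁻ y in (ball x₀ (2 * s))ᶜ, ENNReal.ofReal (‖x - y‖ ^ (α - n)) * F y ≤
      ENNReal.ofReal (2 ^ ((n : ℝ) - α)) * rieszPot n α (maximal n F) x₀ := by
  calc ∫⁻ y in (ball x₀ (2 * s))ᶜ, ENNReal.ofReal (‖x - y‖ ^ (α - n)) * F y
      ≤ ∫⁻ y in (ball x₀ (2 * s))ᶜ, ENNReal.ofReal (2 ^ ((n : ℝ) - α)) *
          (ENNReal.ofReal (‖x₀ - y‖ ^ (α - n)) * maximal n F y) := by
        refine lintegral_mono_ae ?_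
        filter_upwards [ae_restrict_mem measurableSet_ball.compl, ae_restrict_of_ae hFM]
          with y hy hFy
        rw [← mul_assoc, ← ENNReal.ofReal_mul (by positivity)]
        refine mul_le_mul' (ENNReal.ofReal_le_ofReal ?_) hFy
        have := norm_sub_rpow_le_of_far (β := α - n) (by linarith) hx (not_lt.1 hy)
        rwa [neg_sub] at this
    _ ≤ ∫⁻ y, ENNReal.ofReal (2 ^ ((n : ℝ) - α)) *
          (ENNReal.ofReal (‖x₀ - y‖ ^ (α - n)) * maximal n F y) := setLIntegral_le_lintegral _ _
    _ = ENNReal.ofReal (2 ^ ((n : ℝ) - α)) * rieszPot n α (maximal n F) x₀ :=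
        lintegral_const_mul' _ _ ENNReal.ofReal_ne_top

theorem setLAverage_lintegral_ball_le_rieszPot_maximal (hα0 : 0 < α) (hαn : α < n)
    {F : ℝⁿ → ENNReal} (hF : Measurable F) (x₀ : ℝⁿ) {s : ℝ} (hs : 0 < s) :
    (volume (ball x₀ s))⁻¹ *
        ∫⁻ x in ball x₀ s, ∫⁻ y in ball x₀ (2 * s), ENNReal.ofReal (‖x - y‖ ^ (α - n)) * F y ≤
      ENNReal.ofReal (n / α * 3 ^ α * 2 ^ n * 2 ^ ((n : ℝ) - α)) *
        rieszPot n α (maximal n F) x₀ := by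
  have := nontrivial_euclideanSpace_of_lt hα0 hαn
  set v := volume.real (ball (0 : ℝⁿ) 1)
  have hv : 0 < v := ENNReal.toReal_pos (measure_ball_pos _ _ one_pos).ne' measure_ball_lt_top.ne
  have hkernel : ∀ y ∈ ball x₀ (2 * s), ∫⁻ x in ball x₀ s, ENNReal.ofReal (‖x - y‖ ^ (α - n)) ≤
      ENNReal.ofReal (n * v / α * (3 * s) ^ α) := fun y hy => by
    simpa only [finrank_euclideanSpace_fin] using lintegral_ball_norm_sub_rpow_le volume hα0 hs hy
  have hvol : (volume (ball x₀ s))⁻¹ = ENNReal.ofReal (s ^ n * v)⁻¹ := by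
    rw [Measure.addHaar_ball_of_pos _ _ hs, finrank_euclideanSpace_fin, ← ofReal_measureReal,
      ← ENNReal.ofReal_mul (by positivity), ENNReal.ofReal_inv_of_pos (by positivity)]
  have hconst : (s ^ n * v)⁻¹ * (n * v / α * (3 * s) ^ α) * (2 ^ n * (2 * s) ^ ((n : ℝ) - α)) =
      n / α * 3 ^ α * 2 ^ n * 2 ^ ((n : ℝ) - α) := by
    have hsn : s ^ α * s ^ ((n : ℝ) - α) = s ^ n := by
      rw [← Real.rpow_add hs]
      simp
    rw [Real.mul_rpow (by norm_num) hs.le, Real.mul_rpow (by norm_num) hs.le]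
    field_simp
    rw [mul_assoc, hsn, mul_comm]
  calc (volume (ball x₀ s))⁻¹ *
        ∫⁻ x in ball x₀ s, ∫⁻ y in ball x₀ (2 * s), ENNReal.ofReal (‖x - y‖ ^ (α - n)) * F y
      = (volume (ball x₀ s))⁻¹ * ∫⁻ y in ball x₀ (2 * s),
          (∫⁻ x in ball x₀ s, ENNReal.ofReal (‖x - y‖ ^ (α - n))) * F y := by
        rw [lintegral_lintegral_swap]
        · congr 1
          refine lintegral_congr fun y => lintegral_mul_const _ (by fun_prop)
        · exact (((measurable_fst.sub measurable_snd).norm.pow_const _).ennreal_ofReal.mul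
            (hF.comp measurable_snd)).aemeasurable
    _ ≤ ENNReal.ofReal (s ^ n * v)⁻¹ * (ENNReal.ofReal (n * v / α * (3 * s) ^ α) *
          ∫⁻ y in ball x₀ (2 * s), F y) := by
        rw [hvol, ← lintegral_const_mul _ hF]
        exact mul_le_mul_right (setLIntegral_mono (hF.const_mul _) fun y hy =>
          mul_le_mul_left (hkernel y hy) _) _
    _ ≤ ENNReal.ofReal (s ^ n * v)⁻¹ * (ENNReal.ofReal (n * v / α * (3 * s) ^ α) *
          (ENNReal.ofReal (2 ^ n * (2 * s) ^ ((n : ℝ) - α)) * rieszPot n α (maximal n F) x₀)) := by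
        gcongr
        exact lintegral_ball_le_rieszPot_maximal hα0 hαn F x₀ (by positivity)
    _ = ENNReal.ofReal (n / α * 3 ^ α * 2 ^ n * 2 ^ ((n : ℝ) - α)) *
          rieszPot n α (maximal n F) x₀ := by
        simp only [← mul_assoc]
        rw [← ENNReal.ofReal_mul (by positivity), ← ENNReal.ofReal_mul (by positivity), hconst]

theorem setLAverage_rieszPot_le (hα0 : 0 < α) (hαn : α < n) {F : ℝⁿ → ENNReal}
    (hF : Measurable F) (hFM : F ≤ᵐ[volume] maximal n F) (x₀ : ℝⁿ) {s : ℝ} (hs : 0 < s) :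
    (volume (ball x₀ s))⁻¹ * ∫⁻ x in ball x₀ s, rieszPot n α F x ≤
      ENNReal.ofReal (n / α * 3 ^ α * 2 ^ n * 2 ^ ((n : ℝ) - α) + 2 ^ ((n : ℝ) - α)) *
        rieszPot n α (maximal n F) x₀ := by
  have hsplit : ∀ x, rieszPot n α F x =
      (∫⁻ y in ball x₀ (2 * s), ENNReal.ofReal (‖x - y‖ ^ (α - n)) * F y) +
        ∫⁻ y in (ball x₀ (2 * s))ᶜ, ENNReal.ofReal (‖x - y‖ ^ (α - n)) * F y := fun x =>
    (lintegral_add_compl _ measurableSet_ball).symm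
  have hnear : Measurable fun x =>
      ∫⁻ y in ball x₀ (2 * s), ENNReal.ofReal (‖x - y‖ ^ (α - n)) * F y :=
    (((measurable_fst.sub measurable_snd).norm.pow_const _).ennreal_ofReal.mul
      (hF.comp measurable_snd)).lintegral_prod_right'
  have hfar : (volume (ball x₀ s))⁻¹ *
      ∫⁻ x in ball x₀ s, ∫⁻ y in (ball x₀ (2 * s))ᶜ, ENNReal.ofReal (‖x - y‖ ^ (α - n)) * F y ≤
      ENNReal.ofReal (2 ^ ((n : ℝ) - α)) * rieszPot n α (maximal n F) x₀ := by
    set C := ENNReal.ofReal (2 ^ ((n : ℝ) - α)) * rieszPot n α (maximal n F) x₀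
    calc (volume (ball x₀ s))⁻¹ *
          ∫⁻ x in ball x₀ s, ∫⁻ y in (ball x₀ (2 * s))ᶜ, ENNReal.ofReal (‖x - y‖ ^ (α - n)) * F y
        ≤ (volume (ball x₀ s))⁻¹ * ∫⁻ _ in ball x₀ s, C :=
          mul_le_mul_right (setLIntegral_mono' measurableSet_ball fun x hx =>
            lintegral_compl_ball_le_rieszPot_maximal hαn hFM hx) _
      _ = C * ((volume (ball x₀ s))⁻¹ * volume (ball x₀ s)) := by
          rw [setLIntegral_const]
          ring
      _ ≤ C := by grw [ENNReal.inv_mul_le_one, mul_one]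
  calc (volume (ball x₀ s))⁻¹ * ∫⁻ x in ball x₀ s, rieszPot n α F x
      = (volume (ball x₀ s))⁻¹ *
            (∫⁻ x in ball x₀ s, ∫⁻ y in ball x₀ (2 * s), ENNReal.ofReal (‖x - y‖ ^ (α - n)) * F y) +
          (volume (ball x₀ s))⁻¹ * ∫⁻ x in ball x₀ s,
            ∫⁻ y in (ball x₀ (2 * s))ᶜ, ENNReal.ofReal (‖x - y‖ ^ (α - n)) * F y := by
        simp_rw [hsplit]
        rw [lintegral_add_left hnear, mul_add]
    _ ≤ ENNReal.ofReal (n / α * 3 ^ α * 2 ^ n * 2 ^ ((n : ℝ) - α)) *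
          rieszPot n α (maximal n F) x₀ +
        ENNReal.ofReal (2 ^ ((n : ℝ) - α)) * rieszPot n α (maximal n F) x₀ :=
        add_le_add (setLAverage_lintegral_ball_le_rieszPot_maximal hα0 hαn hF x₀ hs) hfar
    _ = _ := by rw [ENNReal.ofReal_add (by positivity) (by positivity), add_mul]

theorem maximal_rieszPot_le_s13 (hα0 : 0 < α) (hαn : α < n) {F : ℝⁿ → ENNReal}
    (hF : Measurable F) (hFM : F ≤ᵐ[volume] maximal n F) (x₀ : ℝⁿ) :
    maximal n (rieszPot n α F) x₀ ≤
      ENNReal.ofReal (n / α * 3 ^ α * 2 ^ n * 2 ^ ((n : ℝ) - α) + 2 ^ ((n : ℝ) - α)) *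
        rieszPot n α (maximal n F) x₀ :=
  iSup₂_le fun _ hs => setLAverage_rieszPot_le hα0 hαn hF hFM x₀ hs

end Riesz

theorem stmt13_general (n : ℕ) (α : ℝ) (hα0 : 0 < α) (hαn : α < n) :
    ∃ C : ℝ, 0 < C ∧ ∀ f : EuclideanSpace ℝ (Fin n) → ℝ, Measurable f → (∀ x, 0 ≤ f x) →
      LocallyIntegrable f volume →
      ∀ (x₀ : EuclideanSpace ℝ (Fin n)) (r : ℝ), 0 < r →
        ∀ g A, g = rieszPot n α (fun y => ENNReal.ofReal (f y)) →
          A = (volume (ball x₀ r))⁻¹ * ∫⁻ y in ball x₀ r, g y →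
          (volume (ball x₀ r))⁻¹ * (∫⁻ y in ball x₀ r, ((g y - A) ⊔ (A - g y))) ≤
              2 * maximal n g x₀ ∧
            2 * maximal n g x₀ ≤
              ENNReal.ofReal C *
                rieszPot n α (maximal n (fun z => ENNReal.ofReal (f z))) x₀ := by
  refine ⟨2 * (n / α * 3 ^ α * 2 ^ n * 2 ^ ((n : ℝ) - α) + 2 ^ ((n : ℝ) - α)), by positivity, ?_⟩
  rintro f hfm hf0 hfl x₀ r hr g A rfl rfl
  refine ⟨(setLAverage_oscillation_le_two_mul volume _ _).trans
    (mul_le_mul_right (setLAverage_le_maximal _ x₀ hr) 2), ?_⟩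
  rw [ENNReal.ofReal_mul zero_le_two, ENNReal.ofReal_ofNat, mul_assoc]
  exact mul_le_mul_right
    (maximal_rieszPot_le_s13 hα0 hαn hfm.ennreal_ofReal (ae_ofReal_le_maximal hfl hf0) x₀) 2

/-- Oscillation bound via the maximal function of a Riesz potential: for every
nonnegative `f ∈ L¹_loc`, every center `x₀` and radius `r > 0`,
`⨍_{B_r(x₀)} |I_α f - ⨍_{B_r(x₀)} I_α f| ≤ 2 M(I_α f)(x₀) ≤ C I_α(M f)(x₀)`
(absolute differences in `[0,∞]` are expressed via truncated subtraction). -/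
theorem stmt13 (n : ℕ) (hn : 0 < n) (α : ℝ) (hα0 : 0 < α) (hαn : α < n) :
    ∃ C : ℝ, 0 < C ∧ ∀ f : EuclideanSpace ℝ (Fin n) → ℝ, Measurable f → (∀ x, 0 ≤ f x) →
      LocallyIntegrable f volume →
      ∀ (x₀ : EuclideanSpace ℝ (Fin n)) (r : ℝ), 0 < r →
        ∀ g A, g = rieszPot n α (fun y => ENNReal.ofReal (f y)) →
          A = (volume (ball x₀ r))⁻¹ * ∫⁻ y in ball x₀ r, g y →
          (volume (ball x₀ r))⁻¹ * (∫⁻ y in ball x₀ r, ((g y - A) ⊔ (A - g y))) ≤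
              2 * maximal n g x₀ ∧
            2 * maximal n g x₀ ≤
              ENNReal.ofReal C *
                rieszPot n α (maximal n (fun z => ENNReal.ofReal (f z))) x₀ :=
  stmt13_general n α hα0 hαn
end
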